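/- arXiv:2312.15843 — 3 statements merged into one kernel-verified Lean document; each statement's English description precedes it below -/
import Mathlib

section
/- Let α < 0, β ∈ ℝ, T > 0, and v₀ ∈ ℝ with v₀ ≤ 1 < −β/α. Then (v₀ − (e^{βT} − 1)·(β/α))·e^{−βT} > e^{αT}·v₀ + (β/α)·(e^{αT} − 1). -/
theorem bound_sharper_than_santoyo
    (α β T v₀ : ℝ) (hα : α < 0) (hT : 0 < T)
    (hv : v₀ ≤ 1) (hβα : 1 < -β / α) :
    Real.exp (α * T) * v₀ + (β / α) * (Real.exp (α * T) - 1)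
      < (v₀ - (Real.exp (β * T) - 1) * (β / α)) * Real.exp (-(β * T)) := by
  have hβ' : -β < α := by
    rwa [lt_div_iff_of_neg hα, one_mul] at hβα
  have hEA : Real.exp (-(β * T)) < Real.exp (α * T) := by
    apply Real.exp_lt_exp.mpr
    nlinarith
  have hBE : Real.exp (β * T) * Real.exp (-(β * T)) = 1 := by
    rw [← Real.exp_add]; simp
  have hEpos := Real.exp_pos (-(β * T))
  have hx : v₀ + β / α < 0 := by
    have : -(β / α) = -β / α := by ring
    linarith [this ▸ hβα]
  nlinarith [mul_pos (sub_pos.2 hEA) (neg_pos.2 hx), hBE]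
end

section
/- Deterministic reach-avoid at a fixed time instant: Let X ⊆ ℝⁿ be open and bounded, Xs ⊆ X closed, T > 0, and γ : [0,T] → ℝⁿ a continuous path with γ(0) ∈ X \ Xs. Suppose v : [0,T] × ℝⁿ → ℝ is continuous and satisfies: (i) the map t ↦ v(t, γ(t)) is nondecreasing on any subinterval of [0,T] on which γ stays in X; (ii) t ↦ v(t, x) is nondecreasing in t for each fixed x ∈ ∂X; (iii) v(T, x) ≤ 0 for all x ∈ cl(X) \ Xs and v(T, x) ≤ 1 for all x ∈ cl(X); and (iv) v(0, γ(0)) > 0. Then γ(t) ∈ X for all t ∈ [0,T) and γ(T) ∈ Xs. -/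
theorem deterministic_reach_avoid_at_time
    {n : ℕ} (X Xs : Set (Fin n → ℝ)) (hX : IsOpen X)
    (hXbd : Bornology.IsBounded X) (hXs : IsClosed Xs) (hsub : Xs ⊆ X)
    (T : ℝ) (hT : 0 < T)
    (γ : ℝ → (Fin n → ℝ)) (hγ : Continuous γ) (h0 : γ 0 ∈ X \ Xs)
    (v : ℝ → (Fin n → ℝ) → ℝ)
    (hv : Continuous fun p : ℝ × (Fin n → ℝ) => v p.1 p.2)
    (hi : ∀ a b : ℝ, 0 ≤ a → a ≤ b → b ≤ T →
      (∀ τ ∈ Set.Icc a b, γ τ ∈ X) → v a (γ a) ≤ v b (γ b))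
    (hii : ∀ x ∈ frontier X, ∀ s t : ℝ, 0 ≤ s → s ≤ t → t ≤ T → v s x ≤ v t x)
    (hiii₁ : ∀ x ∈ closure X \ Xs, v T x ≤ 0)
    (hiii₂ : ∀ x ∈ closure X, v T x ≤ 1)
    (hiv : 0 < v 0 (γ 0)) :
    (∀ t ∈ Set.Ico (0:ℝ) T, γ t ∈ X) ∧ γ T ∈ Xs := by
  have key : ∀ t ∈ Set.Icc (0:ℝ) T, γ t ∈ X := by
    by_contra h
    push_neg at h
    obtain ⟨t₀, ht₀, ht₀X⟩ := h
    set S : Set ℝ := Set.Icc 0 T ∩ γ ⁻¹' Xᶜ with hSdef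
    have hSne : S.Nonempty := ⟨t₀, ht₀, ht₀X⟩
    have hSclosed : IsClosed S :=
      isClosed_Icc.inter (hX.isClosed_compl.preimage hγ)
    have hSbdd : BddBelow S := ⟨0, fun t ht => ht.1.1⟩
    set τ := sInf S with hτdef
    have hτS : τ ∈ S := hSclosed.csInf_mem hSne hSbdd
    have hτX : γ τ ∉ X := hτS.2
    have hτT : τ ≤ T := hτS.1.2
    have hτ0 : 0 < τ := by
      rcases lt_or_eq_of_le hτS.1.1 with h | h
      · exact h
      · exact absurd (h ▸ h0.1) hτX
    have hbefore : ∀ s, 0 ≤ s → s < τ → γ s ∈ X := by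
      intro s hs0 hsτ
      by_contra hc
      exact absurd (csInf_le hSbdd ⟨⟨hs0, hsτ.le.trans hτT⟩, hc⟩) (not_le.mpr hsτ)
    have hf : Continuous fun s => v s (γ s) := hv.comp (continuous_id.prodMk hγ)
    have hNeBot : (nhdsWithin τ (Set.Iio τ)).NeBot := nhdsLT_neBot τ
    have hlim : Filter.Tendsto (fun s => v s (γ s)) (nhdsWithin τ (Set.Iio τ))
        (nhds (v τ (γ τ))) := (hf.tendsto τ).mono_left nhdsWithin_le_nhds
    have hev : ∀ᶠ s in nhdsWithin τ (Set.Iio τ), v 0 (γ 0) ≤ v s (γ s) := by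
      filter_upwards [Ioo_mem_nhdsLT hτ0] with s hs
      exact hi 0 s le_rfl hs.1.le (hs.2.le.trans hτT)
        (fun u hu => hbefore u hu.1 (lt_of_le_of_lt hu.2 hs.2))
    have h1 : v 0 (γ 0) ≤ v τ (γ τ) := ge_of_tendsto hlim hev
    have hγτcl : γ τ ∈ closure X := by
      have hγt : Filter.Tendsto γ (nhdsWithin τ (Set.Iio τ)) (nhds (γ τ)) :=
        (hγ.tendsto τ).mono_left nhdsWithin_le_nhds
      refine mem_closure_of_tendsto hγt ?_
      filter_upwards [Ioo_mem_nhdsLT hτ0] with s hs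
      exact hbefore s hs.1.le hs.2
    have hfr : γ τ ∈ frontier X :=
      ⟨hγτcl, fun hm => hτX (by rwa [hX.interior_eq] at hm)⟩
    have h2 : v τ (γ τ) ≤ v T (γ τ) := hii _ hfr τ T hτ0.le hτT le_rfl
    have h3 : v T (γ τ) ≤ 0 := hiii₁ _ ⟨hγτcl, fun hm => hτX (hsub hm)⟩
    linarith
  constructor
  · intro t ht; exact key t ⟨ht.1, ht.2.le⟩
  · by_contra hc
    have hT1 := key T ⟨hT.le, le_rfl⟩
    have h3 : v T (γ T) ≤ 0 := hiii₁ _ ⟨subset_closure hT1, hc⟩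
    have h4 : v 0 (γ 0) ≤ v T (γ T) := hi 0 T le_rfl hT.le le_rfl (fun u hu => key u hu)
    linarith
end

section
/- Deterministic reach-avoid within a finite horizon: Let X ⊆ ℝⁿ be open and bounded, Xs ⊆ X closed, T > 0, M ≥ 0, and γ : [0,T] → ℝⁿ a continuous path with γ(0) ∈ X \ Xs. Let v, w : [0,T] × ℝⁿ → ℝ be continuous with |w(t,x)| ≤ M for all (t,x) ∈ [0,T] × cl(X). Assume: (i) t ↦ v(t, γ(t)) is nondecreasing on any subinterval on which γ stays in X \ Xs; (ii) for each x ∈ ∂X ∪ ∂Xs, t ↦ v(t,x) is nondecreasing; (iii) v(t, γ(t)) ≤ d/dt[w(t, γ(t))] whenever γ(t) ∈ X \ Xs; (iv) v(t,x) ≤ ∂w/∂t(t,x) for all x ∈ ∂X and t ∈ [0,T]; and (v) v(0, γ(0)) > 2M/T. Then there exists t ∈ [0,T] with γ(t) ∈ Xs and γ(τ) ∈ X for all τ ∈ [0,t). -/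
/-!
Let `t₀` be the first time the path leaves `X \ Xs` (or `T` if it never does) and put
`c = v(0, γ(0))`. Before `t₀`, condition (i) gives `v(t, γ t) ≥ c`, so by (iii) `t ↦ w(t, γ t)`
grows at rate at least `c`. If `γ` does not stop in `Xs` at `t₀`, then either `t₀ = T` or
`x = γ(t₀)` lies on `∂X`; in the latter case (ii) and continuity give `v(t, x) ≥ c` for
`t ≥ t₀`, so by (iv) `t ↦ w(t, x)` keeps growing at rate at least `c` up to `T`. Either way
`w` increases by at least `c T > 2M` between two points of `[0,T] × cl(X)`, contradicting `|w| ≤ M`.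
-/

open Set

lemma mul_sub_le_sub_of_hasDerivAt_ge {f f' : ℝ → ℝ} {a b c : ℝ} (hab : a ≤ b)
    (hf : ContinuousOn f (Icc a b)) (hf' : ∀ t ∈ Ioo a b, HasDerivAt f (f' t) t ∧ c ≤ f' t) :
    c * (b - a) ≤ f b - f a := by
  refine (convex_Icc a b).mul_sub_le_image_sub_of_le_deriv hf (fun t ht => ?_) (fun t ht => ?_)
    a (left_mem_Icc.2 hab) b (right_mem_Icc.2 hab) hab <;> rw [interior_Icc] at ht
  · exact (hf' t ht).1.differentiableAt.differentiableWithinAt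
  · exact (hf' t ht).1.deriv ▸ (hf' t ht).2

lemma IsClosed.mem_of_Ico_subset {C : Set ℝ} {a b : ℝ} (hC : IsClosed C) (hab : a < b)
    (h : Ico a b ⊆ C) : b ∈ C :=
  hC.closure_subset_iff.2 h (by rw [closure_Ico hab.ne]; exact right_mem_Icc.2 hab.le)

lemma exists_first_exit {α : Type*} [TopologicalSpace α] {γ : ℝ → α} {U : Set α} {a b : ℝ}
    (hγ : Continuous γ) (hU : IsOpen U) (hab : a < b) (ha : γ a ∈ U) :
    ∃ t₀ ∈ Ioc a b, (∀ τ ∈ Ico a t₀, γ τ ∈ U) ∧ (γ t₀ ∈ U → t₀ = b) := by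
  set S := Icc a b ∩ γ ⁻¹' Uᶜ ∪ {b}
  have hS : IsClosed S :=
    (isClosed_Icc.inter (hU.isClosed_compl.preimage hγ)).union isClosed_singleton
  have hlb : a ∈ lowerBounds S := by rintro t (ht | rfl); exacts [ht.1.1, hab.le]
  have hbdd : BddBelow S := ⟨a, hlb⟩
  have hle : sInf S ≤ b := csInf_le hbdd (Or.inr rfl)
  have hstay : ∀ τ ∈ Ico a (sInf S), γ τ ∈ U := fun τ hτ => by
    by_contra h
    exact notMem_of_lt_csInf hτ.2 hbdd (Or.inl ⟨⟨hτ.1, hτ.2.le.trans hle⟩, h⟩)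
  have hexit : γ (sInf S) ∈ U → sInf S = b := by
    intro hmemU
    rcases hS.csInf_mem ⟨b, Or.inr rfl⟩ hbdd with hmem | hmem
    exacts [(hmem.2 hmemU).elim, hmem]
  have hpos : a < sInf S := (le_csInf ⟨b, Or.inr rfl⟩ hlb).lt_of_ne fun h => by
    rw [h] at ha; exact hab.ne (h.trans (hexit ha))
  exact ⟨sInf S, ⟨hpos, hle⟩, hstay, hexit⟩

lemma mul_sub_le_sub_of_monotone_le_deriv {u f f' : ℝ → ℝ} {T t₀ : ℝ} (ht₀ : t₀ ∈ Icc 0 T)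
    (hu : ∀ s t : ℝ, 0 ≤ s → s ≤ t → t ≤ T → u s ≤ u t)
    (hf : ∀ t ∈ Icc 0 T, HasDerivAt f (f' t) t ∧ u t ≤ f' t) :
    u t₀ * (T - t₀) ≤ f T - f t₀ := by
  refine mul_sub_le_sub_of_hasDerivAt_ge (f' := f') ht₀.2
    (fun t ht => (hf t (Icc_subset_Icc_left ht₀.1 ht)).1.continuousAt.continuousWithinAt)
    fun t ht => ?_
  have htT : t ∈ Icc 0 T := ⟨ht₀.1.trans ht.1.le, ht.2.le⟩
  exact ⟨(hf t htT).1, (hu t₀ t ht₀.1 ht.1.le ht.2.le).trans (hf t htT).2⟩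

section

variable {E : Type*} {U : Set E} {γ : ℝ → E} {v w : ℝ → E → ℝ} {T t₁ : ℝ}

lemma initial_le_of_forall_Ico_mem
    (hi : ∀ a b : ℝ, 0 ≤ a → a ≤ b → b ≤ T → (∀ τ ∈ Icc a b, γ τ ∈ U) → v a (γ a) ≤ v b (γ b))
    (ht₁ : t₁ ≤ T) (hstay : ∀ τ ∈ Ico 0 t₁, γ τ ∈ U) :
    ∀ τ ∈ Ico 0 t₁, v 0 (γ 0) ≤ v τ (γ τ) := fun τ hτ =>
  hi 0 τ le_rfl hτ.1 (hτ.2.le.trans ht₁) fun s hs => hstay s ⟨hs.1, hs.2.trans_lt hτ.2⟩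

lemma mul_le_sub_of_forall_Ico_mem [TopologicalSpace E] {W' : ℝ → ℝ}
    (hw : Continuous fun p : ℝ × E => w p.1 p.2) (hγ : Continuous γ)
    (hi : ∀ a b : ℝ, 0 ≤ a → a ≤ b → b ≤ T → (∀ τ ∈ Icc a b, γ τ ∈ U) → v a (γ a) ≤ v b (γ b))
    (hiii : ∀ t ∈ Icc (0:ℝ) T, γ t ∈ U →
      HasDerivAt (fun s => w s (γ s)) (W' t) t ∧ v t (γ t) ≤ W' t)
    (ht₁ : t₁ ∈ Icc 0 T) (hstay : ∀ τ ∈ Ico 0 t₁, γ τ ∈ U) :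
    v 0 (γ 0) * t₁ ≤ w t₁ (γ t₁) - w 0 (γ 0) := by
  have hf' : ∀ t ∈ Ioo 0 t₁,
      HasDerivAt (fun s => w s (γ s)) (W' t) t ∧ v 0 (γ 0) ≤ W' t := fun t ht => by
    have htT : t ∈ Icc 0 T := ⟨ht.1.le, ht.2.le.trans ht₁.2⟩
    have hU := hstay t (Ioo_subset_Ico_self ht)
    exact ⟨(hiii t htT hU).1,
      (initial_le_of_forall_Ico_mem hi ht₁.2 hstay t (Ioo_subset_Ico_self ht)).trans (hiii t htT hU).2⟩
  simpa using mul_sub_le_sub_of_hasDerivAt_ge ht₁.1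
    (hw.comp (continuous_id.prodMk hγ)).continuousOn hf'

end

theorem deterministic_reach_avoid_within_horizon_general
    {n : ℕ} (X Xs : Set (Fin n → ℝ)) (hX : IsOpen X)
    (hXs : IsClosed Xs)
    (T M : ℝ) (hT : 0 < T)
    (γ : ℝ → (Fin n → ℝ)) (hγ : Continuous γ) (h0 : γ 0 ∈ X \ Xs)
    (v w : ℝ → (Fin n → ℝ) → ℝ)
    (hv : Continuous fun p : ℝ × (Fin n → ℝ) => v p.1 p.2)
    (hw : Continuous fun p : ℝ × (Fin n → ℝ) => w p.1 p.2)
    (hwbd : ∀ t ∈ Set.Icc (0:ℝ) T, ∀ x ∈ closure X, |w t x| ≤ M)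
    (hi : ∀ a b : ℝ, 0 ≤ a → a ≤ b → b ≤ T →
      (∀ τ ∈ Set.Icc a b, γ τ ∈ X \ Xs) → v a (γ a) ≤ v b (γ b))
    (hii : ∀ x ∈ frontier X ∪ frontier Xs,
      ∀ s t : ℝ, 0 ≤ s → s ≤ t → t ≤ T → v s x ≤ v t x)
    (W' : ℝ → ℝ)
    (hiii : ∀ t ∈ Set.Icc (0:ℝ) T, γ t ∈ X \ Xs →
      HasDerivAt (fun s => w s (γ s)) (W' t) t ∧ v t (γ t) ≤ W' t)
    (wt : ℝ → (Fin n → ℝ) → ℝ)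
    (hivd : ∀ x ∈ frontier X, ∀ t ∈ Set.Icc (0:ℝ) T,
      HasDerivAt (fun s => w s x) (wt t x) t ∧ v t x ≤ wt t x)
    (hv0 : 2 * M / T < v 0 (γ 0)) :
    ∃ t ∈ Set.Icc (0:ℝ) T, γ t ∈ Xs ∧ ∀ τ ∈ Set.Ico (0:ℝ) t, γ τ ∈ X := by
  obtain ⟨t₀, ht₀, hstay, hexit⟩ := exists_first_exit hγ (hX.sdiff hXs) hT h0
  have ht₀T : t₀ ∈ Icc 0 T := Ioc_subset_Icc_self ht₀
  by_cases hhit : γ t₀ ∈ Xs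
  · exact ⟨t₀, ht₀T, hhit, fun τ hτ => (hstay τ hτ).1⟩
  exfalso
  set x := γ t₀
  have hx : x ∈ closure X := (isClosed_closure.preimage hγ).mem_of_Ico_subset ht₀.1
    fun τ hτ => subset_closure (hstay τ hτ).1
  have hvx : v 0 (γ 0) ≤ v t₀ x :=
    (isClosed_le continuous_const (hv.comp (continuous_id.prodMk hγ))).mem_of_Ico_subset ht₀.1
      (initial_le_of_forall_Ico_mem hi ht₀T.2 hstay)
  have hbefore := mul_le_sub_of_forall_Ico_mem hw hγ hi hiii ht₀T hstay
  have hafter : v 0 (γ 0) * (T - t₀) ≤ w T x - w t₀ x := by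
    by_cases hxX : x ∈ X
    · simp [hexit ⟨hxX, hhit⟩]
    have hfr : x ∈ frontier X := hX.frontier_eq ▸ ⟨hx, hxX⟩
    exact (mul_le_mul_of_nonneg_right hvx (sub_nonneg.2 ht₀T.2)).trans
      (mul_sub_le_sub_of_monotone_le_deriv ht₀T (hii x (Or.inl hfr)) (hivd x hfr))
  have hwT := abs_le.1 (hwbd T ⟨hT.le, le_rfl⟩ x hx)
  have hw0 := abs_le.1 (hwbd 0 ⟨le_rfl, hT.le⟩ (γ 0) (subset_closure h0.1))
  have := (div_lt_iff₀ hT).1 hv0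
  linarith

theorem deterministic_reach_avoid_within_horizon
    {n : ℕ} (X Xs : Set (Fin n → ℝ)) (hX : IsOpen X)
    (hXbd : Bornology.IsBounded X) (hXs : IsClosed Xs) (hsub : Xs ⊆ X)
    (T M : ℝ) (hT : 0 < T) (hM : 0 ≤ M)
    (γ : ℝ → (Fin n → ℝ)) (hγ : Continuous γ) (h0 : γ 0 ∈ X \ Xs)
    (v w : ℝ → (Fin n → ℝ) → ℝ)
    (hv : Continuous fun p : ℝ × (Fin n → ℝ) => v p.1 p.2)
    (hw : Continuous fun p : ℝ × (Fin n → ℝ) => w p.1 p.2)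
    (hwbd : ∀ t ∈ Set.Icc (0:ℝ) T, ∀ x ∈ closure X, |w t x| ≤ M)
    (hi : ∀ a b : ℝ, 0 ≤ a → a ≤ b → b ≤ T →
      (∀ τ ∈ Set.Icc a b, γ τ ∈ X \ Xs) → v a (γ a) ≤ v b (γ b))
    (hii : ∀ x ∈ frontier X ∪ frontier Xs,
      ∀ s t : ℝ, 0 ≤ s → s ≤ t → t ≤ T → v s x ≤ v t x)
    (W' : ℝ → ℝ)
    (hiii : ∀ t ∈ Set.Icc (0:ℝ) T, γ t ∈ X \ Xs →
      HasDerivAt (fun s => w s (γ s)) (W' t) t ∧ v t (γ t) ≤ W' t)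
    (wt : ℝ → (Fin n → ℝ) → ℝ)
    (hivd : ∀ x ∈ frontier X, ∀ t ∈ Set.Icc (0:ℝ) T,
      HasDerivAt (fun s => w s x) (wt t x) t ∧ v t x ≤ wt t x)
    (hv0 : 2 * M / T < v 0 (γ 0)) :
    ∃ t ∈ Set.Icc (0:ℝ) T, γ t ∈ Xs ∧ ∀ τ ∈ Set.Ico (0:ℝ) t, γ τ ∈ X :=
  deterministic_reach_avoid_within_horizon_general X Xs hX hXs T M hT γ hγ h0 v w hv hw hwbd hi hii
    W' hiii wt hivd hv0
end
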